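/- Let $d$ be a metric on a finite set $V$ and let $T$ be a spanning tree of the complete graph on $V$. Then there exists a Hamiltonian cycle $C$ on $V$ with $d(C) \leq 2\, d(T)$. Consequently, the minimum Hamiltonian cycle cost is at most twice the minimum spanning tree cost, and since the minimum spanning tree cost is a lower bound on the minimum Hamiltonian cycle cost (for $|V| \geq 3$), the double-tree method is a 2-approximation for metric TSP. -/

import Mathlib

open Finset

variable {V : Type*} [Fintype V] [DecidableEq V]

/-- symmetrized edge cost of a (possibly asymmetric) weight function -/
noncomputable def ecost (d : V → V → ℝ) : Sym2 V → ℝ :=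
  Sym2.lift ⟨fun x y => (d x y + d y x) / 2, fun x y => by ring⟩

/-- total cost of an edge set -/
noncomputable def cost (d : V → V → ℝ) (F : Finset (Sym2 V)) : ℝ :=
  ∑ e ∈ F, ecost d e

/-- edges of a cyclic tour given by a vertex list -/
def cycleEdges (l : List V) : Finset (Sym2 V) :=
  ((l.zip (l.rotate 1)).map fun p => s(p.1, p.2)).toFinset

/-- edges of a path given by a vertex list -/
def pathEdges (l : List V) : Finset (Sym2 V) :=
  (l.zipWith (fun a b => s(a, b)) l.tail).toFinset

def IsHamCycle (l : List V) : Prop := l.Nodup ∧ ∀ v : V, v ∈ l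

def IsHamPath (l : List V) : Prop := l.Nodup ∧ ∀ v : V, v ∈ l

def IsMetric (d : V → V → ℝ) : Prop :=
  (∀ x y, 0 ≤ d x y) ∧ (∀ x, d x x = 0) ∧ (∀ x y, d x y = d y x) ∧
    ∀ x y z, d x z ≤ d x y + d y z

def IsSpanningTree (E : Finset (Sym2 V)) : Prop :=
  (SimpleGraph.fromEdgeSet (E : Set (Sym2 V))).IsTree

/-- edge multiset of a walk given by its vertex list -/
def walkEdges (l : List V) : Multiset (Sym2 V) :=
  (l.zipWith (fun a b => s(a, b)) l.tail : List (Sym2 V))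

/-- cost of a walk, edges counted with multiplicity -/
noncomputable def walkCost (d : V → V → ℝ) (l : List V) : ℝ :=
  ((walkEdges l).map (ecost d)).sum

def IsClosedWalk (l : List V) : Prop := l ≠ [] ∧ l.head? = l.getLast?

/-- vertices touched by an edge set -/
def edgeVerts (F : Finset (Sym2 V)) : Finset V :=
  Finset.univ.filter fun v => ∃ e ∈ F, v ∈ e

/-! ### Auxiliary lemmas -/

set_option linter.unusedSectionVars false
set_option maxHeartbeats 1000000

open SimpleGraph

section helpers
variable {d : V → V → ℝ}

lemma ecost_mk (x y : V) : ecost d s(x, y) = (d x y + d y x) / 2 := rfl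

lemma ecost_nonneg (hd : IsMetric d) (e : Sym2 V) : 0 ≤ ecost d e := by
  induction e using Sym2.ind with
  | _ x y => rw [ecost_mk]; have := hd.1 x y; have := hd.1 y x; linarith

lemma ecost_triangle (hd : IsMetric d) (x y z : V) :
    ecost d s(x, z) ≤ ecost d s(x, y) + ecost d s(y, z) := by
  simp only [ecost_mk]
  have h1 := hd.2.2.2 x y z
  have h2 := hd.2.2.2 z y x
  linarith

lemma ecost_diag (hd : IsMetric d) {e : Sym2 V} (he : e.IsDiag) : ecost d e = 0 := by
  induction e using Sym2.ind with
  | _ x y =>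
    rw [Sym2.mk_isDiag_iff] at he
    subst he
    rw [ecost_mk, hd.2.1]; ring

lemma walkCost_eq (l : List V) :
    walkCost d l = ((List.zipWith (fun a b => s(a, b)) l l.tail).map (ecost d)).sum := by
  simp [walkCost, walkEdges]

lemma walkCost_single (x : V) : walkCost d [x] = 0 := by simp [walkCost_eq]

lemma walkCost_cons_cons (x y : V) (t : List V) :
    walkCost d (x :: y :: t) = ecost d s(x, y) + walkCost d (y :: t) := by
  simp [walkCost_eq]

lemma walkCost_append_cons (a : List V) (u : V) (m : List V) :
    walkCost d (a ++ u :: m) = walkCost d (a ++ [u]) + walkCost d (u :: m) := by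
  induction a with
  | nil => simp [walkCost_single]
  | cons x a ih =>
    cases a with
    | nil => simp [walkCost_cons_cons, walkCost_single]
    | cons y a' =>
      simp only [List.cons_append, walkCost_cons_cons] at *
      rw [ih]; ring

lemma sum_toFinset_le {α : Type*} [DecidableEq α] (f : α → ℝ) (hf : ∀ a, 0 ≤ f a) :
    ∀ l : List α, ∑ a ∈ l.toFinset, f a ≤ (l.map f).sum := by
  intro l
  induction l with
  | nil => simp
  | cons a t ih =>
    simp only [List.toFinset_cons, List.map_cons, List.sum_cons]
    by_cases h : a ∈ t.toFinset
    · rw [Finset.insert_eq_self.2 h]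
      have := hf a; linarith
    · rw [Finset.sum_insert h]; linarith

lemma take1_eq (a : List V) (u v : V) (b : List V) :
    (a ++ u :: v :: b).take 1 = (a ++ u :: b).take 1 := by
  cases a <;> simp

lemma zip_map_eq (l t : List V) :
    (l.zip t).map (fun p => s(p.1, p.2)) = List.zipWith (fun a b => s(a,b)) l t := by
  induction l generalizing t with
  | nil => simp
  | cons x l ih => cases t <;> simp [ih]

end helpers

lemma reach_erase (E : Finset (Sym2 V)) (v u : V)
    (hone : ∀ e ∈ E, v ∈ e → e = s(v, u)) :
    ∀ n (x y : V), x ≠ v → y ≠ v →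
      ∀ p : (SimpleGraph.fromEdgeSet (E : Set (Sym2 V))).Walk x y, p.length ≤ n →
      (SimpleGraph.fromEdgeSet ((E.erase s(v, u) : Finset (Sym2 V)) : Set (Sym2 V))).Reachable x y := by
  intro n
  induction n with
  | zero =>
    intro x y hx hy p hp
    have := SimpleGraph.Walk.eq_of_length_eq_zero (Nat.le_zero.1 hp)
    exact this ▸ SimpleGraph.Reachable.refl _
  | succ n ih =>
    intro x y hx hy p hp
    cases p with
    | nil => exact SimpleGraph.Reachable.refl _
    | @cons _ z _ h q =>
      rw [SimpleGraph.fromEdgeSet_adj] at h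
      by_cases hz : z = v
      · have hxz : s(x, z) = s(v, u) := hone _ h.1 (by rw [hz]; simp)
        have hxu : x = u := by
          rw [Sym2.eq_iff] at hxz
          rcases hxz with ⟨h1, _⟩ | ⟨h1, _⟩
          · exact absurd h1 hx
          · exact h1
        cases q with
        | nil => exact absurd hz hy
        | @cons _ z' _ h' q' =>
          rw [SimpleGraph.fromEdgeSet_adj] at h'
          have hz'e : s(z, z') = s(v, u) := hone _ h'.1 (by rw [hz]; simp)
          have hz' : z' = u := by
            rw [Sym2.eq_iff] at hz'e
            rcases hz'e with ⟨_, h2⟩ | ⟨h1, h2⟩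
            · exact h2
            · exact absurd (h2.trans hz.symm) (Ne.symm h'.2)
          have hlen : q'.length ≤ n := by
            simp only [SimpleGraph.Walk.length_cons] at hp
            omega
          have hzu : z' ≠ v := by
            rw [hz']
            intro hc
            rw [hc] at hxu
            exact hx hxu
          have := ih z' y hzu hy q' hlen
          rw [hxu]
          exact hz' ▸ this
      · have hne : s(x, z) ≠ s(v, u) := by
          intro hc
          have : v ∈ s(x, z) := by rw [hc]; simp
          simp only [Sym2.mem_iff] at this
          rcases this with h1 | h1
          · exact hx h1.symm
          · exact hz h1.symm
        have hadj : (SimpleGraph.fromEdgeSet ((E.erase s(v, u) : Finset (Sym2 V)) : Set (Sym2 V))).Adj x z := by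
          rw [SimpleGraph.fromEdgeSet_adj]
          exact ⟨by simp [Finset.mem_erase, hne, h.1], h.2⟩
        have hlen : q.length ≤ n := by
          simp only [SimpleGraph.Walk.length_cons] at hp; omega
        exact hadj.reachable.trans (ih z y hz hy q hlen)

lemma tree_tour (d : V → V → ℝ) (hd : IsMetric d) :
    ∀ n (S : Finset V) (E : Finset (Sym2 V)),
      S.card = n → S.Nonempty →
      (∀ e ∈ E, ¬ e.IsDiag ∧ ∀ x ∈ e, x ∈ S) →
      E.card + 1 = S.card →
      (∀ x ∈ S, ∀ y ∈ S, (SimpleGraph.fromEdgeSet (E : Set (Sym2 V))).Reachable x y) →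
      ∃ l : List V, l ≠ [] ∧ l.Nodup ∧ l.toFinset = S ∧
        walkCost d (l ++ l.take 1) ≤ 2 * cost d E := by
  intro n
  induction n with
  | zero =>
    intro S E hcard hne
    exact absurd (Finset.card_eq_zero.1 hcard ▸ hne) (by simp)
  | succ m ih =>
    intro S E hcard hne hE hcount hreach
    by_cases hm : S.card = 1
    · obtain ⟨v, hv⟩ := Finset.card_eq_one.1 hm
      have hE0 : E = ∅ := Finset.card_eq_zero.1 (by omega)
      refine ⟨[v], by simp, by simp, by simp [hv], ?_⟩
      have : walkCost d ([v] ++ [v].take 1) = 0 := by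
        simp only [List.take, List.singleton_append]
        rw [walkCost_cons_cons, walkCost_single, ecost_diag hd (by simp)]
        ring
      rw [this, hE0]
      simp [cost]
    · -- S.card = m + 1 ≥ 2
      have hcard2 : 2 ≤ S.card := by omega
      -- degree sum
      have hdegsum : ∑ v ∈ S, (E.filter (fun e => v ∈ e)).card = 2 * E.card := by
        have h1 : ∀ v, (E.filter (fun e => v ∈ e)).card = ∑ e ∈ E, if v ∈ e then 1 else 0 := by
          intro v; rw [Finset.card_filter]
        simp_rw [h1]
        rw [Finset.sum_comm]
        have h2 : ∀ e ∈ E, (∑ v ∈ S, if v ∈ e then 1 else 0) = 2 := by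
          intro e he
          obtain ⟨hdiag, hmem⟩ := hE e he
          induction e using Sym2.ind with
          | _ a b =>
            rw [Sym2.mk_isDiag_iff] at hdiag
            have ha : a ∈ S := hmem a (by simp)
            have hb : b ∈ S := hmem b (by simp)
            rw [← Finset.card_filter]
            have : S.filter (fun v => v ∈ s(a, b)) = {a, b} := by
              ext x
              simp only [Finset.mem_filter, Sym2.mem_iff, Finset.mem_insert, Finset.mem_singleton]
              constructor
              · rintro ⟨_, h⟩; exact h
              · rintro (rfl | rfl) <;> simp [ha, hb]
            rw [this]
            simp [Finset.card_insert_of_notMem, hdiag]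
        rw [Finset.sum_congr rfl h2, Finset.sum_const, smul_eq_mul, mul_comm]
      -- a vertex of degree ≤ 1
      have hex : ∃ v ∈ S, (E.filter (fun e => v ∈ e)).card ≤ 1 := by
        by_contra hc
        push_neg at hc
        have : ∀ v ∈ S, 2 ≤ (E.filter (fun e => v ∈ e)).card := fun v hv => hc v hv
        have h3 : S.card * 2 ≤ ∑ v ∈ S, (E.filter (fun e => v ∈ e)).card := by
          calc S.card * 2 = ∑ _v ∈ S, 2 := by rw [Finset.sum_const, smul_eq_mul]
          _ ≤ _ := Finset.sum_le_sum this
        omega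
      obtain ⟨v, hv, hdeg⟩ := hex
      -- degree exactly 1
      have hdegge : 1 ≤ (E.filter (fun e => v ∈ e)).card := by
        have hnev : (S.erase v).Nonempty :=
          Finset.card_pos.1 (by rw [Finset.card_erase_of_mem hv]; omega)
        obtain ⟨w, hw⟩ := hnev
        have hwS : w ∈ S := Finset.mem_of_mem_erase hw
        have hwv : w ≠ v := Finset.ne_of_mem_erase hw
        obtain ⟨p⟩ := hreach v hv w hwS
        cases p with
        | nil => exact absurd rfl hwv.symm
        | @cons _ z _ h q =>
          rw [SimpleGraph.fromEdgeSet_adj] at h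
          exact Finset.card_pos.2 ⟨s(v, z), Finset.mem_filter.2 ⟨h.1, by simp⟩⟩
      have hdeg1 : (E.filter (fun e => v ∈ e)).card = 1 := le_antisymm hdeg hdegge
      obtain ⟨e0, he0⟩ := Finset.card_eq_one.1 hdeg1
      have he0E : e0 ∈ E := by
        have : e0 ∈ E.filter (fun e => v ∈ e) := he0 ▸ Finset.mem_singleton_self e0
        exact (Finset.mem_filter.1 this).1
      have hve0 : v ∈ e0 := by
        have : e0 ∈ E.filter (fun e => v ∈ e) := he0 ▸ Finset.mem_singleton_self e0
        exact (Finset.mem_filter.1 this).2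
      have hone : ∀ e ∈ E, v ∈ e → e = e0 := by
        intro e he hvmem
        have : e ∈ E.filter (fun e => v ∈ e) := Finset.mem_filter.2 ⟨he, hvmem⟩
        rw [he0] at this
        exact Finset.mem_singleton.1 this
      obtain ⟨u, hu⟩ : ∃ u, e0 = s(v, u) := ⟨Sym2.Mem.other hve0, (Sym2.other_spec hve0).symm⟩
      have huv : u ≠ v := by
        intro hc
        exact (hE e0 he0E).1 (by rw [hu, hc]; simp)
      have huS : u ∈ S := (hE e0 he0E).2 u (by rw [hu]; simp)
      -- shrink
      set S' := S.erase v with hS'def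
      set E' := E.erase e0 with hE'def
      have hcardS' : S'.card = m := by
        rw [hS'def, Finset.card_erase_of_mem hv]; omega
      have hneS' : S'.Nonempty := by
        rw [← Finset.card_pos, hcardS']; omega
      have hE' : ∀ e ∈ E', ¬ e.IsDiag ∧ ∀ x ∈ e, x ∈ S' := by
        intro e he
        have heE : e ∈ E := Finset.mem_of_mem_erase he
        have hene : e ≠ e0 := Finset.ne_of_mem_erase he
        refine ⟨(hE e heE).1, fun x hx => ?_⟩
        refine Finset.mem_erase.2 ⟨?_, (hE e heE).2 x hx⟩
        intro hc
        exact hene (hone e heE (hc ▸ hx))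
      have hcountE' : E'.card + 1 = S'.card := by
        rw [hE'def, Finset.card_erase_of_mem he0E, hcardS']
        omega
      have hreach' : ∀ x ∈ S', ∀ y ∈ S',
          (SimpleGraph.fromEdgeSet ((E' : Finset (Sym2 V)) : Set (Sym2 V))).Reachable x y := by
        intro x hx y hy
        have hxv : x ≠ v := Finset.ne_of_mem_erase hx
        have hyv : y ≠ v := Finset.ne_of_mem_erase hy
        obtain ⟨p⟩ := hreach x (Finset.mem_of_mem_erase hx) y (Finset.mem_of_mem_erase hy)
        have := reach_erase E v u (fun e he hm => (hone e he hm).trans hu) p.length x y hxv hyv p le_rfl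
        rw [hE'def, hu]
        exact this
      obtain ⟨l', hl'ne, hl'nd, hl'fin, hl'cost⟩ := ih S' E' hcardS' hneS' hE' hcountE' hreach'
      have hul' : u ∈ l' := by
        rw [← List.mem_toFinset, hl'fin]
        exact Finset.mem_erase.2 ⟨huv, huS⟩
      obtain ⟨a, b, hab⟩ := List.append_of_mem hul'
      have hvl' : v ∉ l' := by
        rw [← List.mem_toFinset, hl'fin]
        simp [hS'def]
      set l : List V := a ++ u :: v :: b with hldef
      have hlnd : l.Nodup := by
        have h1 : l = (a ++ [u]) ++ v :: b := by simp [hldef]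
        rw [h1, List.nodup_middle]
        have h2 : (a ++ [u]) ++ b = l' := by simp [hab]
        rw [h2, List.nodup_cons]
        exact ⟨hvl', hl'nd⟩
      have hmeml : ∀ x, x ∈ l ↔ x = v ∨ x ∈ l' := by
        intro x
        simp only [hldef, hab, List.mem_append, List.mem_cons]
        tauto
      have hlfin : l.toFinset = S := by
        ext x
        rw [List.mem_toFinset, hmeml x, ← List.mem_toFinset, hl'fin]
        simp only [hS'def, Finset.mem_erase]
        constructor
        · rintro (rfl | ⟨_, h⟩)
          · exact hv
          · exact h
        · intro hx
          by_cases hxv : x = v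
          · exact Or.inl hxv
          · exact Or.inr ⟨hxv, hx⟩
      refine ⟨l, by simp [hldef], hlnd, hlfin, ?_⟩
      -- cost computation
      have ht1 : l.take 1 = l'.take 1 := by
        rw [hldef, hab]; exact take1_eq a u v b
      have hrne : b ++ l'.take 1 ≠ [] := by
        intro hc
        rw [List.append_eq_nil_iff] at hc
        have : l' ≠ [] := hl'ne
        rcases List.exists_cons_of_ne_nil this with ⟨c, t, hct⟩
        rw [hct] at hc
        simp at hc
      obtain ⟨w, r, hwr⟩ := List.exists_cons_of_ne_nil hrne
      have hsplit1 : l ++ l.take 1 = a ++ u :: v :: w :: r := by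
        rw [ht1, hldef, ← hwr]
        simp
      have hsplit2 : l' ++ l'.take 1 = a ++ u :: w :: r := by
        rw [← hwr, hab]
        simp
      have hc1 : walkCost d (l ++ l.take 1)
          = walkCost d (a ++ [u]) + ecost d s(u, v) + ecost d s(v, w) + walkCost d (w :: r) := by
        rw [hsplit1, walkCost_append_cons, walkCost_cons_cons, walkCost_cons_cons]
        ring
      have hc2 : walkCost d (l' ++ l'.take 1)
          = walkCost d (a ++ [u]) + ecost d s(u, w) + walkCost d (w :: r) := by
        rw [hsplit2, walkCost_append_cons, walkCost_cons_cons]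
        ring
      have htri : ecost d s(v, w) ≤ ecost d s(v, u) + ecost d s(u, w) := ecost_triangle hd v u w
      have hswap : ecost d s(u, v) = ecost d s(v, u) := by rw [Sym2.eq_swap]
      have hcostE : cost d E = cost d E' + ecost d e0 := by
        rw [cost, cost, hE'def, Finset.sum_erase_add E _ he0E]
      have hee0 : ecost d e0 = ecost d s(v, u) := by rw [hu]
      rw [hc1, hcostE, hee0]
      rw [hc2] at hl'cost
      linarith

lemma cycleEdges_cost_le {d : V → V → ℝ} (hd : IsMetric d) (x : V) (t : List V) :
    cost d (cycleEdges (x :: t)) ≤ walkCost d ((x :: t) ++ (x :: t).take 1) := by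
  have hrot : (x :: t).rotate 1 = t ++ [x] := by
    rw [List.rotate_cons_succ, List.rotate_zero]
  have hlist : ((x :: t).zip ((x :: t).rotate 1)).map (fun p => s(p.1, p.2))
      = List.zipWith (fun a b => s(a,b)) (x :: t) (t ++ [x]) := by
    rw [hrot, zip_map_eq]
  have hwalk : walkCost d ((x :: t) ++ (x :: t).take 1)
      = ((List.zipWith (fun a b => s(a,b)) (x :: t) (t ++ [x])).map (ecost d)).sum := by
    have h1 : (x :: t) ++ (x :: t).take 1 = (x :: t) ++ [x] := by simp
    have h3 : (x :: t).length = (t ++ [x]).length := by simp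
    have hz : List.zipWith (fun a b => s(a,b)) ((x :: t) ++ [x]) (((x :: t) ++ [x]).tail)
        = List.zipWith (fun a b => s(a,b)) (x :: t) (t ++ [x]) := by
      have h2 : ((x :: t) ++ [x]).tail = t ++ [x] := by simp
      rw [h2]
      have := (List.zipWith_append h3 : List.zipWith (fun a b => s(a,b)) ((x :: t) ++ [x]) ((t ++ [x]) ++ ([] : List V)) = _)
      simpa using this
    rw [h1, walkCost_eq, hz]
  rw [hwalk, cost, cycleEdges, hlist]
  exact sum_toFinset_le (ecost d) (ecost_nonneg hd) _

lemma reach_patch (G : SimpleGraph V) (p₀ q₀ : V)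
    (h : (G \ fromEdgeSet {s(p₀, q₀)}).Reachable p₀ q₀) :
    ∀ {x y : V}, G.Walk x y → (G \ fromEdgeSet {s(p₀, q₀)}).Reachable x y := by
  intro x y w
  induction w with
  | nil => exact Reachable.refl _
  | @cons a b c hadj w ih =>
    refine Reachable.trans ?_ ih
    by_cases he : s(a, b) = s(p₀, q₀)
    · rw [Sym2.eq_iff] at he
      rcases he with ⟨rfl, rfl⟩ | ⟨rfl, rfl⟩
      · exact h
      · exact h.symm
    · refine Adj.reachable ?_
      rw [SimpleGraph.sdiff_adj, SimpleGraph.fromEdgeSet_adj]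
      push_neg
      exact ⟨hadj, fun hc => absurd hc (by simpa using he)⟩

lemma mem_zipWith_prefix {α : Type*} (f : α → α → Sym2 α) :
    ∀ (l t s' : List α) (e : Sym2 α), e ∈ List.zipWith f l t → e ∈ List.zipWith f l (t ++ s') := by
  intro l
  induction l with
  | nil => intro t s' e h; simp at h
  | cons x l ih =>
    intro t s' e h
    cases t with
    | nil => simp at h
    | cons y t =>
      simp only [List.zipWith_cons_cons, List.mem_cons, List.cons_append] at h ⊢
      rcases h with h | h
      · exact Or.inl h
      · exact Or.inr (ih t s' e h)

lemma list_reach (P : Finset (Sym2 V)) :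
    ∀ (l : List V), l.Nodup →
      (∀ e ∈ List.zipWith (fun a b => s(a, b)) l l.tail, e ∈ P) →
      ∀ x ∈ l, ∀ y ∈ l, (SimpleGraph.fromEdgeSet (P : Set (Sym2 V))).Reachable x y := by
  intro l
  induction l with
  | nil => intro _ _ x hx; simp at hx
  | cons a t ih =>
    intro hnd hP
    have hr : ∀ x ∈ a :: t, (SimpleGraph.fromEdgeSet (P : Set (Sym2 V))).Reachable a x := by
      intro x hx
      cases t with
      | nil =>
        simp only [List.mem_singleton] at hx
        exact hx ▸ Reachable.refl _
      | cons b t' =>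
        have hadj : (SimpleGraph.fromEdgeSet (P : Set (Sym2 V))).Adj a b := by
          rw [SimpleGraph.fromEdgeSet_adj]
          refine ⟨hP s(a, b) (by simp), ?_⟩
          intro hc
          rw [List.nodup_cons] at hnd
          exact hnd.1 (hc ▸ (List.mem_cons_self : b ∈ b :: t'))
        rcases List.mem_cons.1 hx with rfl | hx
        · exact Reachable.refl _
        · have ht' : ∀ e ∈ List.zipWith (fun a b => s(a, b)) (b :: t') (b :: t').tail, e ∈ P := by
            intro e he
            apply hP
            simp only [List.tail_cons, List.zipWith_cons_cons, List.mem_cons] at he ⊢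
            exact Or.inr he
          exact hadj.reachable.trans
            (ih (List.nodup_cons.1 hnd).2 ht' b (List.mem_cons_self : b ∈ b :: t') x hx)
    intro x hx y hy
    exact (hr x hx).symm.trans (hr y hy)

lemma graph_erase_eq (E' : Finset (Sym2 V)) (p q : V) :
    SimpleGraph.fromEdgeSet ((E' : Set (Sym2 V))) \ fromEdgeSet {s(p, q)}
      = SimpleGraph.fromEdgeSet ((E'.erase s(p, q) : Finset (Sym2 V)) : Set (Sym2 V)) := by
  ext v w
  simp only [SimpleGraph.sdiff_adj, SimpleGraph.fromEdgeSet_adj, Finset.coe_erase,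
    Set.mem_diff, Set.mem_singleton_iff, Finset.mem_coe]
  tauto

/-- the double-tree method: every spanning tree yields a Hamiltonian
cycle of at most twice its metric cost; moreover (for `|V| ≥ 3`) the minimum spanning
tree cost is a lower bound on the cost of every Hamiltonian cycle. -/
theorem stmt11 {V : Type*} [Fintype V] [DecidableEq V]
    (d : V → V → ℝ) (hd : IsMetric d)
    (T : Finset (Sym2 V)) (hT : IsSpanningTree T) :
    (∃ C : List V, IsHamCycle C ∧ cost d (cycleEdges C) ≤ 2 * cost d T) ∧
      (3 ≤ Fintype.card V → ∀ C : List V, IsHamCycle C →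
        ∃ T' : Finset (Sym2 V), IsSpanningTree T' ∧
          cost d T' ≤ cost d (cycleEdges C)) := by
  classical
  constructor
  · -- Part 1: double tree
    have hNe : Nonempty V := hT.isConnected.nonempty
    set E := T.filter (fun e => ¬ e.IsDiag) with hEdef
    have hgeq : SimpleGraph.fromEdgeSet ((E : Finset (Sym2 V)) : Set (Sym2 V))
        = SimpleGraph.fromEdgeSet (T : Set (Sym2 V)) := by
      ext v w
      simp only [SimpleGraph.fromEdgeSet_adj, Finset.mem_coe, hEdef, Finset.mem_filter]
      constructor
      · rintro ⟨⟨h1, _⟩, h2⟩; exact ⟨h1, h2⟩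
      · rintro ⟨h1, h2⟩
        exact ⟨⟨h1, fun hdg => h2 (Sym2.mk_isDiag_iff.1 hdg)⟩, h2⟩
    have hfin : Fintype (SimpleGraph.fromEdgeSet (T : Set (Sym2 V))).edgeSet :=
      Set.Finite.fintype (Set.toFinite _)
    have hcardE := @SimpleGraph.IsTree.card_edgeFinset _ (SimpleGraph.fromEdgeSet (T : Set (Sym2 V))) _ hfin hT
    have hEF : @SimpleGraph.edgeFinset _ (SimpleGraph.fromEdgeSet (T : Set (Sym2 V))) hfin = E := by
      ext e
      rw [SimpleGraph.mem_edgeFinset, SimpleGraph.edgeSet_fromEdgeSet]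
      simp [hEdef]
    rw [hEF] at hcardE
    have hEprop : ∀ e ∈ E, ¬ e.IsDiag ∧ ∀ x ∈ e, x ∈ (Finset.univ : Finset V) := by
      intro e he
      exact ⟨(Finset.mem_filter.1 he).2, fun x _ => Finset.mem_univ x⟩
    have hcount : E.card + 1 = (Finset.univ : Finset V).card := by
      rw [Finset.card_univ]; exact hcardE
    have hreach : ∀ x ∈ (Finset.univ : Finset V), ∀ y ∈ (Finset.univ : Finset V),
        (SimpleGraph.fromEdgeSet ((E : Finset (Sym2 V)) : Set (Sym2 V))).Reachable x y := by
      intro x _ y _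
      rw [hgeq]
      exact hT.isConnected.preconnected x y
    obtain ⟨l, hlne, hlnd, hlfin, hlcost⟩ :=
      tree_tour d hd (Finset.univ : Finset V).card Finset.univ E rfl
        Finset.univ_nonempty hEprop hcount hreach
    have hcostTE : cost d T = cost d E := by
      refine (Finset.sum_subset (Finset.filter_subset _ _) ?_).symm
      intro e heT henE
      have hdg : e.IsDiag := by
        by_contra hnd
        exact henE (Finset.mem_filter.2 ⟨heT, hnd⟩)
      exact ecost_diag hd hdg
    refine ⟨l, ⟨hlnd, fun v => by rw [← List.mem_toFinset, hlfin]; exact Finset.mem_univ v⟩, ?_⟩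
    obtain ⟨x, t, rfl⟩ := List.exists_cons_of_ne_nil hlne
    calc cost d (cycleEdges (x :: t)) ≤ walkCost d ((x :: t) ++ (x :: t).take 1) :=
          cycleEdges_cost_le hd x t
      _ ≤ 2 * cost d E := hlcost
      _ = 2 * cost d T := by rw [hcostTE]
  · -- Part 2: MST lower bound
    intro hcard3 C hC
    have hNe : Nonempty V := hT.isConnected.nonempty
    have hCne : C ≠ [] := by
      intro hc
      obtain ⟨v⟩ := hNe
      have := hC.2 v
      rw [hc] at this
      simp at this
    -- pathEdges C ⊆ cycleEdges C
    have hpc : pathEdges C ⊆ cycleEdges C := by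
      obtain ⟨x, t, rfl⟩ := List.exists_cons_of_ne_nil hCne
      intro e he
      rw [pathEdges, List.mem_toFinset] at he
      rw [cycleEdges, List.mem_toFinset]
      have hrot : (x :: t).rotate 1 = t ++ [x] := by
        rw [List.rotate_cons_succ, List.rotate_zero]
      rw [hrot, zip_map_eq]
      exact mem_zipWith_prefix _ (x :: t) t [x] e he
    -- connectivity of path edges
    have hreachP : ∀ x y, (SimpleGraph.fromEdgeSet ((pathEdges C : Finset (Sym2 V)) : Set (Sym2 V))).Reachable x y := by
      intro x y
      exact list_reach (pathEdges C) C hC.1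
        (fun e he => by rw [pathEdges, List.mem_toFinset]; exact he)
        x (hC.2 x) y (hC.2 y)
    -- minimal connected subset
    set 𝒮 := (pathEdges C).powerset.filter
      (fun F => ∀ x y, (SimpleGraph.fromEdgeSet ((F : Finset (Sym2 V)) : Set (Sym2 V))).Reachable x y) with h𝒮def
    have h𝒮ne : pathEdges C ∈ 𝒮 :=
      Finset.mem_filter.2 ⟨Finset.mem_powerset.2 (Finset.Subset.refl _), hreachP⟩
    obtain ⟨E', hE'mem, hE'min⟩ := Finset.exists_min_image 𝒮 Finset.card ⟨_, h𝒮ne⟩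
    have hE'sub : E' ⊆ pathEdges C := Finset.mem_powerset.1 (Finset.mem_filter.1 hE'mem).1
    have hE'reach : ∀ x y, (SimpleGraph.fromEdgeSet ((E' : Finset (Sym2 V)) : Set (Sym2 V))).Reachable x y :=
      (Finset.mem_filter.1 hE'mem).2
    have hconn : (SimpleGraph.fromEdgeSet ((E' : Finset (Sym2 V)) : Set (Sym2 V))).Connected :=
      SimpleGraph.Connected.mk (fun x y => hE'reach x y)
    have hacyc : (SimpleGraph.fromEdgeSet ((E' : Finset (Sym2 V)) : Set (Sym2 V))).IsAcyclic := by
      intro v c hcyc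
      cases c with
      | nil => exact SimpleGraph.Walk.IsCycle.not_of_nil hcyc
      | @cons _ b _ hadj c' =>
        have he : s(v, b) ∈ (SimpleGraph.Walk.cons hadj c').edges := by simp
        have h2 := (SimpleGraph.adj_and_reachable_delete_edges_iff_exists_cycle.2
          ⟨v, SimpleGraph.Walk.cons hadj c', hcyc, he⟩).2
        have hmem : s(v, b) ∈ E' := by
          have := hadj
          rw [SimpleGraph.fromEdgeSet_adj] at this
          exact this.1
        have hE'' : E'.erase s(v, b) ∈ 𝒮 := by
          refine Finset.mem_filter.2
            ⟨Finset.mem_powerset.2 ((Finset.erase_subset _ _).trans hE'sub), ?_⟩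
          intro x y
          obtain ⟨w⟩ := hE'reach x y
          have := reach_patch _ v b h2 w
          rw [graph_erase_eq] at this
          exact this
        have hle := hE'min _ hE''
        rw [Finset.card_erase_of_mem hmem] at hle
        have hpos : 0 < E'.card := Finset.card_pos.2 ⟨_, hmem⟩
        omega
    refine ⟨E', ⟨hconn, hacyc⟩, ?_⟩
    exact Finset.sum_le_sum_of_subset_of_nonneg (hE'sub.trans hpc)
      (fun e _ _ => ecost_nonneg hd e)
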